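/- The 2-matching inequality is valid: for any feasible CAGVRP solution with ground-vehicle edge incidence vector x ∈ {0,1}^E and self-assignment variables y_{ii} ∈ {0,1} satisfying the degree constraints Σ_{j} x_{ij} = 2 y_{ii} for all i, any handle H ⊆ T and teeth I ⊆ δ(H) such that no two edges of I share an endpoint and |I| is odd, it holds that Σ_{e∈γ(H)} x_e + Σ_{e∈I} x_e ≤ Σ_{i∈H} y_{ii} + (|I|−1)/2. -/

import Mathlib

/-!
Summing the degree equations over `H` gives `x(γ(H))` twice plus the cut `x(δ(H))`, so
`x(γ(H)) + x(I) ≤ Σ_{i ∈ H} y_ii + (|I| - 1)/2` says `2 x(I) ≤ x(δ(H)) + |I| - 1`.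
Since `I ⊆ δ(H)` and `x ≤ 1`, both `x(δ(H))` and `|I|` bound `x(I)`; the cut is even because
`x(γ(H))` is, while `|I|` is odd, so the two bounds cannot be attained together.
-/

open Finset

section TwoMatching

variable {V : Type*}

/-- Pairing `(a, b)` with `(b, a)` shows that the sum is even. -/
theorem even_sum_sum_of_symm (s : Finset V) (f : V → V → ℤ) (hsymm : ∀ i j, f i j = f j i)
    (hdiag : ∀ i, f i i = 0) : Even (∑ a ∈ s, ∑ b ∈ s, f a b) := by
  rw [← ZMod.intCast_eq_zero_iff_even, ← sum_product']
  push_cast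
  refine sum_involution (fun p _ => p.swap) (fun p _ => ?_) (fun p hp hne hswap => ?_)
    (fun p hp => mem_product.2 (mem_product.1 hp).symm) (fun p _ => p.swap_swap)
  · rw [Prod.fst_swap, Prod.snd_swap, hsymm p.2 p.1, ← two_mul]
    exact mul_eq_zero_of_left (by decide) _
  · obtain ⟨a, b⟩ := p
    obtain rfl : b = a := congrArg Prod.fst hswap
    simp [hdiag] at hne

variable [Fintype V] [DecidableEq V]

theorem sum_sum_add_sum_sum_compl_eq_two_mul {R : Type*} [CommSemiring R] (x : V → V → R)
    (y : V → R) (hdeg : ∀ i, ∑ j, x i j = 2 * y i) (H : Finset V) :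
    ∑ a ∈ H, ∑ b ∈ H, x a b + ∑ a ∈ H, ∑ b ∈ Hᶜ, x a b = 2 * ∑ i ∈ H, y i := by
  rw [← sum_add_distrib, mul_sum]
  exact sum_congr rfl fun i _ => (sum_add_sum_compl H (x i)).trans (hdeg i)

theorem sum_le_sum_sum_compl {M : Type*} [AddCommMonoid M] [PartialOrder M]
    [IsOrderedAddMonoid M] (x : V → V → M) (hx : ∀ i j, 0 ≤ x i j) (H : Finset V)
    (I : Finset (V × V)) (hI : ∀ e ∈ I, e.1 ∈ H ∧ e.2 ∉ H) :
    ∑ e ∈ I, x e.1 e.2 ≤ ∑ a ∈ H, ∑ b ∈ Hᶜ, x a b := by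
  rw [← sum_product']
  exact sum_le_sum_of_subset_of_nonneg
    (fun e he => mem_product.2 ⟨(hI e he).1, mem_compl.2 (hI e he).2⟩) fun _ _ _ => hx _ _

theorem two_matching_inequality_int (x : V → V → ℤ) (y : V → ℤ) (hx : ∀ i j, 0 ≤ x i j)
    (hsymm : ∀ i j, x i j = x j i) (hdiag : ∀ i, x i i = 0)
    (hdeg : ∀ i, ∑ j, x i j = 2 * y i) (H : Finset V) (I : Finset (V × V))
    (hI : ∀ e ∈ I, e.1 ∈ H ∧ e.2 ∉ H) (hI_le : ∀ e ∈ I, x e.1 e.2 ≤ 1) (hodd : Odd #I) :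
    ∑ a ∈ H, ∑ b ∈ H, x a b + 2 * ∑ e ∈ I, x e.1 e.2 ≤ 2 * ∑ i ∈ H, y i + (#I - 1) := by
  have hsplit := sum_sum_add_sum_sum_compl_eq_two_mul x y hdeg H
  have hcut_even : Even (∑ a ∈ H, ∑ b ∈ Hᶜ, x a b) :=
    (Int.even_add.1 (hsplit ▸ even_two_mul _)).1 (even_sum_sum_of_symm H x hsymm hdiag)
  have hle_cut := sum_le_sum_sum_compl x hx H I hI
  have hle_card : ∑ e ∈ I, x e.1 e.2 ≤ #I := by simpa using sum_le_card_nsmul I _ 1 hI_le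
  obtain ⟨c, hc⟩ := hcut_even
  obtain ⟨k, hk⟩ := hodd
  omega

end TwoMatching

theorem stmt_5_general (n : ℕ) (x y : Fin n → Fin n → ℝ)
    (hx01 : ∀ i j, x i j = 0 ∨ x i j = 1) (hxsym : ∀ i j, x i j = x j i)
    (hxloop : ∀ i, x i i = 0)
    (hy01 : ∀ i, y i i = 0 ∨ y i i = 1)
    (hdeg : ∀ i, ∑ j, x i j = 2 * y i i)
    (H : Finset (Fin n)) (I : Finset (Fin n × Fin n))
    (hI : ∀ e ∈ I, e.1 ∈ H ∧ e.2 ∉ H)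
    (hodd : Odd I.card) :
    (∑ a ∈ H, ∑ b ∈ H, x a b) / 2 + ∑ e ∈ I, x e.1 e.2 ≤
      ∑ i ∈ H, y i i + ((I.card : ℝ) - 1) / 2 := by
  obtain ⟨z, rfl⟩ : ∃ z : Fin n → Fin n → ℤ, x = fun i j => (z i j : ℝ) :=
    ⟨fun i j => if x i j = 1 then 1 else 0, by ext i j; rcases hx01 i j with h | h <;> simp [h]⟩
  obtain ⟨w, hw⟩ : ∃ w : Fin n → ℤ, ∀ i, y i i = w i :=
    ⟨fun i => if y i i = 1 then 1 else 0, fun i => by rcases hy01 i with h | h <;> simp [h]⟩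
  simp only [hw] at hx01 hxsym hxloop hdeg ⊢
  have hz01 (i j : Fin n) : z i j = 0 ∨ z i j = 1 := by exact_mod_cast hx01 i j
  have key := two_matching_inequality_int z w (fun i j => by have := hz01 i j; omega)
    (fun i j => by exact_mod_cast hxsym i j) (fun i => by exact_mod_cast hxloop i)
    (fun i => by exact_mod_cast hdeg i) H I hI (fun e _ => by have := hz01 e.1 e.2; omega) hodd
  rify at key
  linarith

theorem stmt_5 (n : ℕ) (x y : Fin n → Fin n → ℝ)
    (hx01 : ∀ i j, x i j = 0 ∨ x i j = 1) (hxsym : ∀ i j, x i j = x j i)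
    (hxloop : ∀ i, x i i = 0)
    (hy01 : ∀ i, y i i = 0 ∨ y i i = 1)
    (hdeg : ∀ i, ∑ j, x i j = 2 * y i i)
    (H : Finset (Fin n)) (I : Finset (Fin n × Fin n))
    (hI : ∀ e ∈ I, e.1 ∈ H ∧ e.2 ∉ H)
    (hmatch : ∀ e ∈ I, ∀ f ∈ I, e ≠ f →
      e.1 ≠ f.1 ∧ e.2 ≠ f.2 ∧ e.1 ≠ f.2 ∧ e.2 ≠ f.1)
    (hodd : Odd I.card) :
    (∑ a ∈ H, ∑ b ∈ H, x a b) / 2 + ∑ e ∈ I, x e.1 e.2 ≤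
      ∑ i ∈ H, y i i + ((I.card : ℝ) - 1) / 2 :=
  stmt_5_general n x y hx01 hxsym hxloop hy01 hdeg H I hI hodd
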